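/- (Vector potential representation.) Let U ⊆ ℝ³ be open, let ω, ε, μ ∈ ℂ with ω·ε·μ ≠ 0, and set k² = ω²εμ. Let A, Ã : ℝ³ → ℂ³ be vector fields whose components are three times continuously differentiable on U and satisfy the componentwise Helmholtz equations ΔA + k²A = 0 and ΔÃ + k²Ã = 0 on U. Define the scalar fields φ = (1/(iωεμ))·∇·A and ψ = (1/(iωεμ))·∇·Ã, and the vector fields E = −∇φ + iωA − (1/ε)·∇×Ã and H = (1/μ)·∇×A − ∇ψ + iωÃ. Then (E, H) satisfies the time-harmonic Maxwell equations on U: ∇×H = −iωεE and ∇×E = iωμH. -/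

import Mathlib

open scoped BigOperators

noncomputable section

/-- Points of `ℝ³`. -/
abbrev E3 := EuclideanSpace ℝ (Fin 3)

/-- Partial derivative of a scalar field in the `i`-th coordinate direction. -/
noncomputable def pd (i : Fin 3) (u : E3 → ℂ) : E3 → ℂ :=
  fun x => fderiv ℝ u x (EuclideanSpace.single i 1)

/-- Gradient of a scalar field, as a `ℂ³`-valued field. -/
noncomputable def grad (u : E3 → ℂ) : E3 → Fin 3 → ℂ :=
  fun x i => pd i u x

/-- Laplacian of a scalar field. -/
noncomputable def lap (u : E3 → ℂ) : E3 → ℂ :=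
  fun x => ∑ i : Fin 3, pd i (pd i u) x

/-- Divergence of a `ℂ³`-valued vector field. -/
noncomputable def vdiv (F : E3 → Fin 3 → ℂ) : E3 → ℂ :=
  fun x => ∑ i : Fin 3, pd i (fun y => F y i) x

/-- Curl of a `ℂ³`-valued vector field:
`(∇×F)ᵢ = ∂_{i+1} F_{i+2} − ∂_{i+2} F_{i+1}` (indices mod 3). -/
noncomputable def curl (F : E3 → Fin 3 → ℂ) : E3 → Fin 3 → ℂ :=
  fun x i => pd (i + 1) (fun y => F y (i + 2)) x - pd (i + 2) (fun y => F y (i + 1)) x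

/-- Cross product on `ℂ³`. -/
def crossC (a b : Fin 3 → ℂ) : Fin 3 → ℂ :=
  fun i => a (i + 1) * b (i + 2) - a (i + 2) * b (i + 1)


/-! Both equations come from one computation: a field `α • ∇×F − ∇χ + β • G` has curl
`α • (∇(∇·F) − ΔF) + β • ∇×G`, because the curl of a gradient vanishes and `∇×∇× = ∇∇· − Δ`
(both by symmetry of second derivatives). `H` has this shape with `F = A`, `G = Ã`, and `E` with
`F = Ã`, `G = A`. The Helmholtz equation turns `−ΔA` into `k²A`, and the Lorenz gauge makes the
remaining `∇(∇·A)` term equal to `iωε∇φ`; symmetrically for the second equation. -/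

section PartialDerivatives

variable {x : E3} {u v : E3 → ℂ}

lemma pd_add (hu : DifferentiableAt ℝ u x) (hv : DifferentiableAt ℝ v x) (i : Fin 3) :
    pd i (fun y => u y + v y) x = pd i u x + pd i v x := by
  simp only [pd, fderiv_fun_add hu hv]; rfl

lemma pd_sub (hu : DifferentiableAt ℝ u x) (hv : DifferentiableAt ℝ v x) (i : Fin 3) :
    pd i (fun y => u y - v y) x = pd i u x - pd i v x := by
  simp only [pd, fderiv_fun_sub hu hv]; rfl

lemma pd_const_mul (hu : DifferentiableAt ℝ u x) (c : ℂ) (i : Fin 3) :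
    pd i (fun y => c * u y) x = c * pd i u x := by
  simp only [pd, fderiv_const_mul hu]; rfl

lemma ContDiffAt.pd {n m : WithTop ℕ∞} (h : ContDiffAt ℝ n u x) (hmn : m + 1 ≤ n) (i : Fin 3) :
    ContDiffAt ℝ m (_root_.pd i u) x :=
  (h.fderiv_right hmn).clm_apply contDiffAt_const

lemma pd_pd_eq_fderiv_fderiv (h : ContDiffAt ℝ 2 u x) (i j : Fin 3) :
    pd i (pd j u) x =
      fderiv ℝ (fderiv ℝ u) x (EuclideanSpace.single i 1) (EuclideanSpace.single j 1) := by
  have hd : DifferentiableAt ℝ (fderiv ℝ u) x :=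
    (h.fderiv_right (m := 1) le_rfl).differentiableAt one_ne_zero
  change fderiv ℝ (fun y => fderiv ℝ u y (EuclideanSpace.single j 1)) x _ = _
  simp [fderiv_clm_apply hd (differentiableAt_const _)]

lemma pd_comm (h : ContDiffAt ℝ 2 u x) (i j : Fin 3) : pd i (pd j u) x = pd j (pd i u) x := by
  rw [pd_pd_eq_fderiv_fderiv h, pd_pd_eq_fderiv_fderiv h,
    h.isSymmSndFDerivAt (by simp [minSmoothness_of_isRCLikeNormedField])]

end PartialDerivatives

lemma Fin.sum_univ_three_rotate {M : Type*} [AddCommMonoid M] (f : Fin 3 → M) (i : Fin 3) :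
    ∑ j, f j = f i + f (i + 1) + f (i + 2) := by
  fin_cases i <;> simp [Fin.sum_univ_three] <;> abel

section VectorCalculus

variable {x : E3} {F G : E3 → Fin 3 → ℂ} {u : E3 → ℂ}

lemma curl_apply_add_one (F : E3 → Fin 3 → ℂ) (y : E3) (i : Fin 3) :
    curl F y (i + 1) = pd (i + 2) (fun z => F z i) y - pd i (fun z => F z (i + 2)) y := by
  fin_cases i <;> rfl

lemma curl_apply_add_two (F : E3 → Fin 3 → ℂ) (y : E3) (i : Fin 3) :
    curl F y (i + 2) = pd i (fun z => F z (i + 1)) y - pd (i + 1) (fun z => F z i) y := by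
  fin_cases i <;> rfl

lemma curl_add (hF : ∀ j, DifferentiableAt ℝ (fun y => F y j) x)
    (hG : ∀ j, DifferentiableAt ℝ (fun y => G y j) x) : curl (F + G) x = curl F x + curl G x := by
  ext i
  simp only [curl, Pi.add_apply, pd_add (hF _) (hG _)]
  ring

lemma curl_sub (hF : ∀ j, DifferentiableAt ℝ (fun y => F y j) x)
    (hG : ∀ j, DifferentiableAt ℝ (fun y => G y j) x) : curl (F - G) x = curl F x - curl G x := by
  ext i
  simp only [curl, Pi.sub_apply, pd_sub (hF _) (hG _)]
  ring

lemma curl_const_smul (hF : ∀ j, DifferentiableAt ℝ (fun y => F y j) x) (c : ℂ) :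
    curl (c • F) x = c • curl F x := by
  ext i
  simp only [curl, Pi.smul_apply, smul_eq_mul, pd_const_mul (hF _)]
  ring

lemma differentiableAt_curl_apply (hF : ∀ j, ContDiffAt ℝ 2 (fun y => F y j) x) (i : Fin 3) :
    DifferentiableAt ℝ (fun y => curl F y i) x :=
  (((hF _).pd le_rfl _).differentiableAt one_ne_zero).sub
    (((hF _).pd le_rfl _).differentiableAt one_ne_zero)

lemma differentiableAt_grad_apply (hu : ContDiffAt ℝ 2 u x) (i : Fin 3) :
    DifferentiableAt ℝ (fun y => grad u y i) x :=
  (hu.pd le_rfl i).differentiableAt one_ne_zero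

lemma contDiffAt_vdiv {n m : WithTop ℕ∞} (hF : ∀ j, ContDiffAt ℝ n (fun y => F y j) x)
    (hmn : m + 1 ≤ n) : ContDiffAt ℝ m (vdiv F) x :=
  ContDiffAt.sum fun j _ => (hF j).pd hmn j

lemma grad_const_mul_vdiv (hF : ∀ j, ContDiffAt ℝ 2 (fun y => F y j) x) (c : ℂ) (i : Fin 3) :
    grad (fun y => c * vdiv F y) x i = c * pd i (vdiv F) x :=
  pd_const_mul ((contDiffAt_vdiv hF le_rfl).differentiableAt one_ne_zero) c i

lemma curl_grad (hu : ContDiffAt ℝ 2 u x) : curl (grad u) x = 0 := by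
  ext i
  simp only [curl, grad, Pi.zero_apply, pd_comm hu, sub_self]

lemma curl_curl (hF : ∀ j, ContDiffAt ℝ 2 (fun y => F y j) x) (i : Fin 3) :
    curl (curl F) x i = pd i (vdiv F) x - lap (fun y => F y i) x := by
  have hpd : ∀ a j, DifferentiableAt ℝ (pd a fun y => F y j) x :=
    fun a j => ((hF j).pd le_rfl a).differentiableAt one_ne_zero
  have hdiv : pd i (vdiv F) x = pd i (pd i fun z => F z i) x
      + pd i (pd (i + 1) fun z => F z (i + 1)) x + pd i (pd (i + 2) fun z => F z (i + 2)) x := by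
    have hsum : vdiv F = fun y => pd i (fun z => F z i) y + pd (i + 1) (fun z => F z (i + 1)) y
        + pd (i + 2) (fun z => F z (i + 2)) y :=
      funext fun y => Fin.sum_univ_three_rotate (fun j => pd j (fun z => F z j) y) i
    rw [hsum, pd_add ((hpd _ _).fun_add (hpd _ _)) (hpd _ _), pd_add (hpd _ _) (hpd _ _)]
  have hcurl : curl (curl F) x i = pd (i + 1) (fun y => curl F y (i + 2)) x
      - pd (i + 2) (fun y => curl F y (i + 1)) x := rfl
  simp only [curl_apply_add_one, curl_apply_add_two] at hcurl
  rw [hcurl, pd_sub (hpd _ _) (hpd _ _), pd_sub (hpd _ _) (hpd _ _), hdiv, lap,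
    Fin.sum_univ_three_rotate _ i, pd_comm (hF (i + 1)) i (i + 1), pd_comm (hF (i + 2)) i (i + 2)]
  ring

lemma curl_smul_curl_sub_grad_add_smul (α β : ℂ) {χ : E3 → ℂ}
    (hF : ∀ j, ContDiffAt ℝ 2 (fun y => F y j) x) (hχ : ContDiffAt ℝ 2 χ x)
    (hG : ∀ j, DifferentiableAt ℝ (fun y => G y j) x) (i : Fin 3) :
    curl (α • curl F - grad χ + β • G) x i =
      α * (pd i (vdiv F) x - lap (fun y => F y i) x) + β * curl G x i := by
  have hcF := differentiableAt_curl_apply hF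
  have hgχ := differentiableAt_grad_apply hχ
  rw [curl_add (F := α • curl F - grad χ) (G := β • G)
      (fun j => ((hcF j).const_mul α).sub (hgχ j)) (fun j => (hG j).const_mul β),
    curl_sub (F := α • curl F) (fun j => (hcF j).const_mul α) hgχ, curl_const_smul hcF,
    curl_const_smul hG, curl_grad hχ]
  simp [curl_curl hF]

end VectorCalculus

/-- **vector potential representation.** Let `A` (vector potential) and `Ã`
(vector anti-potential) have `C³` components on an open set `U` and satisfy the componentwise
Helmholtz equation with `k² = ω²εμ` (where `ωεμ ≠ 0`). With the Lorenz-gauge scalar potentials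
`φ = (1/(iωεμ))∇·A`, `ψ = (1/(iωεμ))∇·Ã`, the fields `E = −∇φ + iωA − (1/ε)∇×Ã` and
`H = (1/μ)∇×A − ∇ψ + iωÃ` satisfy Maxwell's equations `∇×H = −iωεE`, `∇×E = iωμH` on `U`. -/
theorem vector_potential_representation_satisfies_maxwell
    (U : Set E3) (hU : IsOpen U) (ω ε μ : ℂ) (hωεμ : ω * ε * μ ≠ 0)
    (A At : E3 → Fin 3 → ℂ)
    (hA : ∀ i : Fin 3, ContDiffOn ℝ 3 (fun x => A x i) U)
    (hAt : ∀ i : Fin 3, ContDiffOn ℝ 3 (fun x => At x i) U)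
    (hHelmA : ∀ x ∈ U, ∀ i : Fin 3,
      lap (fun y => A y i) x + (ω ^ 2 * ε * μ) * A x i = 0)
    (hHelmAt : ∀ x ∈ U, ∀ i : Fin 3,
      lap (fun y => At y i) x + (ω ^ 2 * ε * μ) * At x i = 0)
    (φ ψ : E3 → ℂ)
    (hφ : ∀ y, φ y = (1 / (Complex.I * ω * ε * μ)) * vdiv A y)
    (hψ : ∀ y, ψ y = (1 / (Complex.I * ω * ε * μ)) * vdiv At y)
    (E H : E3 → Fin 3 → ℂ)
    (hEdef : ∀ y, ∀ i : Fin 3,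
      E y i = -(grad φ y i) + Complex.I * ω * A y i - (1 / ε) * curl At y i)
    (hHdef : ∀ y, ∀ i : Fin 3,
      H y i = (1 / μ) * curl A y i - grad ψ y i + Complex.I * ω * At y i) :
    ∀ x ∈ U, ∀ i : Fin 3,
      curl H x i = -Complex.I * ω * ε * E x i ∧
      curl E x i = Complex.I * ω * μ * H x i := by
  intro x hx i
  have hω : ω ≠ 0 := left_ne_zero_of_mul (left_ne_zero_of_mul hωεμ)
  have hε : ε ≠ 0 := right_ne_zero_of_mul (left_ne_zero_of_mul hωεμ)
  have hμ : μ ≠ 0 := right_ne_zero_of_mul hωεμ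
  have cA j : ContDiffAt ℝ 3 (fun y => A y j) x := (hA j).contDiffAt (hU.mem_nhds hx)
  have cAt j : ContDiffAt ℝ 3 (fun y => At y j) x := (hAt j).contDiffAt (hU.mem_nhds hx)
  have cA₂ j : ContDiffAt ℝ 2 (fun y => A y j) x := (cA j).of_le (by norm_num)
  have cAt₂ j : ContDiffAt ℝ 2 (fun y => At y j) x := (cAt j).of_le (by norm_num)
  have cdivA : ContDiffAt ℝ 2 (vdiv A) x := contDiffAt_vdiv cA (by norm_num)
  have cdivAt : ContDiffAt ℝ 2 (vdiv At) x := contDiffAt_vdiv cAt (by norm_num)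
  have hE : E = (-(1 / ε)) • curl At - grad φ + (Complex.I * ω) • A := by
    ext y j; simp only [hEdef, Pi.add_apply, Pi.sub_apply, Pi.smul_apply, smul_eq_mul]; ring
  have hH : H = (1 / μ) • curl A - grad ψ + (Complex.I * ω) • At := by
    ext y j; simp only [hHdef, Pi.add_apply, Pi.sub_apply, Pi.smul_apply, smul_eq_mul]
  obtain rfl : φ = fun y => 1 / (Complex.I * ω * ε * μ) * vdiv A y := funext hφ
  obtain rfl : ψ = fun y => 1 / (Complex.I * ω * ε * μ) * vdiv At y := funext hψ
  constructor
  · rw [hH, curl_smul_curl_sub_grad_add_smul _ _ cA₂ (contDiffAt_const.mul cdivAt)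
        (fun j => (cAt j).differentiableAt (by norm_num)),
      hEdef, grad_const_mul_vdiv cA₂]
    field_simp
    linear_combination -hHelmA x hx i + (μ * ω ^ 2 * ε * A x i) * Complex.I_sq
  · rw [hE, curl_smul_curl_sub_grad_add_smul _ _ cAt₂ (contDiffAt_const.mul cdivA)
        (fun j => (cA j).differentiableAt (by norm_num)),
      hHdef, grad_const_mul_vdiv cAt₂]
    field_simp
    linear_combination hHelmAt x hx i - (ε * ω ^ 2 * μ * At x i) * Complex.I_sq
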